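/- The extended function f satisfies f(x, y, z) ≥ π·max{x, y, z} for all (x, y, z) ∈ ℝ³. -/

import Mathlib

open Real

/-- Milnor's Lobachevsky function. -/
noncomputable def Lob (x : ℝ) : ℝ := -∫ t in (0:ℝ)..x, Real.log |2 * Real.sin t|

/-- Angle opposite the side of length `a` in a euclidean triangle with side
lengths `a`, `b`, `c`, given by the arccos formula (which, since `Real.arccos`
clamps, also implements the broken-triangle convention: the angle opposite a
too-long side is `π` and the other two angles are `0`). -/
noncomputable def eang (a b c : ℝ) : ℝ := Real.arccos ((b^2 + c^2 - a^2) / (2*b*c))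

/-- The open domain `𝒜` where `eˣ, e^y, e^z` satisfy the strict triangle
inequalities. -/
def Adom : Set (ℝ × ℝ × ℝ) :=
  {p | Real.exp p.1 < Real.exp p.2.1 + Real.exp p.2.2 ∧
       Real.exp p.2.1 < Real.exp p.2.2 + Real.exp p.1 ∧
       Real.exp p.2.2 < Real.exp p.1 + Real.exp p.2.1}

/-- The triangle function `f(x,y,z) = αx + βy + γz + Л(α) + Л(β) + Л(γ)`
(extended to all of `ℝ³` by the broken-triangle convention). -/
noncomputable def fTri (p : ℝ × ℝ × ℝ) : ℝ :=
  eang (Real.exp p.1) (Real.exp p.2.1) (Real.exp p.2.2) * p.1 +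
  eang (Real.exp p.2.1) (Real.exp p.2.2) (Real.exp p.1) * p.2.1 +
  eang (Real.exp p.2.2) (Real.exp p.1) (Real.exp p.2.1) * p.2.2 +
  Lob (eang (Real.exp p.1) (Real.exp p.2.1) (Real.exp p.2.2)) +
  Lob (eang (Real.exp p.2.1) (Real.exp p.2.2) (Real.exp p.1)) +
  Lob (eang (Real.exp p.2.2) (Real.exp p.1) (Real.exp p.2.1))


/-!
For fixed `y, z` the partial derivative `∂f/∂x` equals `α` wherever the triangle exists: by the
law of sines `x - log (2 sin α) = y - log (2 sin β) = z - log (2 sin γ)`, so in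
`∂f/∂x = α + Σ (xᵢ - log (2 sin αᵢ)) αᵢ'` the sum is a common factor times `α' + β' + γ' = 0`.
Hence `f - πx` is nonincreasing in `x` up to the point `eˣ = e^y + e^z` where the triangle
degenerates, and beyond it `f = πx` because `Л(0) = Л(π) = 0`. If instead another side is
too long, `f` is `π` times that (larger) coordinate.
-/

open MeasureTheory intervalIntegral Set

lemma intervalIntegrable_log_abs_two_mul_sin (a b : ℝ) :
    IntervalIntegrable (fun t => log |2 * sin t|) volume a b := by
  have : AnalyticOnNhd ℝ (fun t => 2 * sin t) univ := analyticOnNhd_const.mul analyticOnNhd_sin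
  simpa only [Real.norm_eq_abs] using
    (this.meromorphicOn.mono_set (subset_univ (uIcc a b))).intervalIntegrable_log_norm

lemma continuous_Lob : Continuous Lob :=
  (continuous_primitive intervalIntegrable_log_abs_two_mul_sin 0).neg

lemma Lob_zero : Lob 0 = 0 := by simp [Lob]

lemma Lob_pi : Lob π = 0 := by
  have h : ∫ t in (0:ℝ)..π, log |2 * sin t| = ∫ t in (0:ℝ)..π, (log 2 + log (sin t)) := by
    refine integral_congr_ae ?_
    filter_upwards [Measure.ae_ne volume π] with t hne ht
    rw [uIoc_of_le pi_pos.le] at ht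
    have hsin : 0 < sin t := sin_pos_of_pos_of_lt_pi ht.1 (lt_of_le_of_ne ht.2 hne)
    rw [abs_of_pos (by positivity), log_mul two_ne_zero hsin.ne']
  rw [Lob, h, integral_add (g := fun t => log (sin t)) intervalIntegrable_const
    intervalIntegrable_log_sin, integral_log_sin_zero_pi, intervalIntegral.integral_const]
  simp only [sub_zero, smul_eq_mul]
  ring

lemma hasDerivAt_Lob {θ : ℝ} (h : sin θ ≠ 0) : HasDerivAt Lob (-log |2 * sin θ|) θ := by
  refine (integral_hasDerivAt_right (intervalIntegrable_log_abs_two_mul_sin 0 θ) ?_ ?_).neg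
  · have : Measurable fun t => log |2 * sin t| := by fun_prop
    exact this.stronglyMeasurable.stronglyMeasurableAtFilter
  · exact ((continuous_const.mul continuous_sin).abs.continuousAt).log (by simpa using h)

/-- `16 · area²` of the triangle with sides `a, b, c`, by Heron's formula. -/
def heron (a b c : ℝ) : ℝ := (a + b + c) * (b + c - a) * (c + a - b) * (a + b - c)

lemma heron_rotate (a b c : ℝ) : heron b c a = heron a b c := by
  unfold heron; ring

lemma heron_swap (a b c : ℝ) : heron a c b = heron a b c := by
  unfold heron; ring

lemma eang_comm (a b c : ℝ) : eang a b c = eang a c b := by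
  unfold eang; ring_nf

section Triangle

variable {a b c : ℝ}

lemma heron_pos (h₁ : a < b + c) (h₂ : b < c + a) (h₃ : c < a + b) : 0 < heron a b c := by
  have : 0 < a + b + c := by linarith
  have : 0 < b + c - a := by linarith
  have : 0 < c + a - b := by linarith
  have : 0 < a + b - c := by linarith
  unfold heron
  positivity

lemma sqrt_one_sub_sq_cos_eang (hb : 0 < b) (hc : 0 < c) :
    √(1 - ((b ^ 2 + c ^ 2 - a ^ 2) / (2 * b * c)) ^ 2) = √(heron a b c) / (2 * b * c) := by
  have : 1 - ((b ^ 2 + c ^ 2 - a ^ 2) / (2 * b * c)) ^ 2 = heron a b c / (2 * b * c) ^ 2 := by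
    unfold heron; field_simp; ring
  rw [this, sqrt_div' _ (by positivity), sqrt_sq (by positivity)]

lemma sin_eang (hb : 0 < b) (hc : 0 < c) : sin (eang a b c) = √(heron a b c) / (2 * b * c) := by
  rw [eang, sin_arccos, sqrt_one_sub_sq_cos_eang hb hc]

lemma log_abs_two_mul_sin_eang (hb : 0 < b) (hc : 0 < c) (h : 0 < heron a b c) :
    log |2 * sin (eang a b c)| = log √(heron a b c) - log b - log c := by
  have hS : 0 < √(heron a b c) := sqrt_pos.2 h
  rw [sin_eang hb hc, show 2 * (√(heron a b c) / (2 * b * c)) = √(heron a b c) / (b * c) by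
    field_simp, abs_of_pos (by positivity), log_div hS.ne' (by positivity), log_mul hb.ne' hc.ne']
  ring

lemma sin_eang_ne_zero (hb : 0 < b) (hc : 0 < c) (h : 0 < heron a b c) :
    sin (eang a b c) ≠ 0 := by
  rw [sin_eang hb hc]
  have := sqrt_pos.2 h
  positivity

lemma eang_eq_pi_of_add_le (hb : 0 < b) (hc : 0 < c) (h : b + c ≤ a) : eang a b c = π := by
  refine arccos_of_le_neg_one ?_
  rw [div_le_iff₀ (by positivity)]
  nlinarith

lemma eang_eq_zero_of_add_le (hb : 0 < b) (hc : 0 < c) (h : b + c ≤ a) : eang b c a = 0 := by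
  have ha : 0 < a := by linarith
  refine arccos_of_one_le ?_
  rw [le_div_iff₀ (by positivity)]
  nlinarith

lemma hasDerivAt_eang_opposite (hb : 0 < b) (hc : 0 < c) (h : 0 < heron a b c) :
    HasDerivAt (fun a => eang a b c) (2 * a / √(heron a b c)) a := by
  have hq : HasDerivAt (fun a => (b ^ 2 + c ^ 2 - a ^ 2) / (2 * b * c))
      (-(2 * a) / (2 * b * c)) a := by
    simpa using ((hasDerivAt_pow 2 a).const_sub (b ^ 2 + c ^ 2)).div_const (2 * b * c)
  have hsq : 0 < 1 - ((b ^ 2 + c ^ 2 - a ^ 2) / (2 * b * c)) ^ 2 := by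
    rw [← sqrt_pos, sqrt_one_sub_sq_cos_eang hb hc]; positivity
  refine ((hasDerivAt_arccos (by nlinarith) (by nlinarith)).comp a hq).congr_deriv ?_
  rw [sqrt_one_sub_sq_cos_eang hb hc]
  field_simp

lemma hasDerivAt_eang_adjacent (ha : 0 < a) (hc : 0 < c) (h : 0 < heron a b c) :
    HasDerivAt (fun a => eang b c a) (-(a ^ 2 + b ^ 2 - c ^ 2) / (a * √(heron a b c))) a := by
  rw [← heron_rotate] at h ⊢
  have hq : HasDerivAt (fun a => (c ^ 2 + a ^ 2 - b ^ 2) / (2 * c * a))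
      ((2 * a * (2 * c * a) - (c ^ 2 + a ^ 2 - b ^ 2) * (2 * c)) / (2 * c * a) ^ 2) a := by
    refine HasDerivAt.div ?_ ?_ (by positivity)
    · simpa using ((hasDerivAt_pow 2 a).const_add (c ^ 2)).sub_const (b ^ 2)
    · simpa using (hasDerivAt_id a).const_mul (2 * c)
  have hsq : 0 < 1 - ((c ^ 2 + a ^ 2 - b ^ 2) / (2 * c * a)) ^ 2 := by
    rw [← sqrt_pos, sqrt_one_sub_sq_cos_eang hc ha]; positivity
  refine ((hasDerivAt_arccos (by nlinarith) (by nlinarith)).comp a hq).congr_deriv ?_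
  rw [sqrt_one_sub_sq_cos_eang hc ha]
  field_simp
  ring

end Triangle

lemma continuous_eang_exp {X : Type*} [TopologicalSpace X] {f g h : X → ℝ} (hf : Continuous f)
    (hg : Continuous g) (hh : Continuous h) :
    Continuous fun t => eang (exp (f t)) (exp (g t)) (exp (h t)) :=
  continuous_arccos.comp <| by fun_prop (disch := exact fun _ => by positivity)

lemma continuous_fTri : Continuous fTri := by
  have := continuous_Lob
  have := continuous_eang_exp (f := fun p : ℝ × ℝ × ℝ => p.1) (g := fun p => p.2.1)
    (h := fun p => p.2.2) (by fun_prop) (by fun_prop) (by fun_prop)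
  have := continuous_eang_exp (f := fun p : ℝ × ℝ × ℝ => p.2.1) (g := fun p => p.2.2)
    (h := fun p => p.1) (by fun_prop) (by fun_prop) (by fun_prop)
  have := continuous_eang_exp (f := fun p : ℝ × ℝ × ℝ => p.2.2) (g := fun p => p.1)
    (h := fun p => p.2.1) (by fun_prop) (by fun_prop) (by fun_prop)
  unfold fTri
  fun_prop

lemma fTri_rotate (x y z : ℝ) : fTri (y, z, x) = fTri (x, y, z) := by
  unfold fTri; ring

lemma fTri_of_add_le {x y z : ℝ} (h : exp y + exp z ≤ exp x) : fTri (x, y, z) = π * x := by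
  have hγ : eang (exp z) (exp x) (exp y) = 0 := by
    rw [eang_comm]; exact eang_eq_zero_of_add_le (exp_pos z) (exp_pos y) (by linarith)
  simp only [fTri, eang_eq_pi_of_add_le (exp_pos y) (exp_pos z) h,
    eang_eq_zero_of_add_le (exp_pos y) (exp_pos z) h, hγ, Lob_zero, Lob_pi]
  ring

lemma hasDerivAt_fTri_fst {x y z : ℝ} (h : (x, y, z) ∈ Adom) :
    HasDerivAt (fun u => fTri (u, y, z)) (eang (exp x) (exp y) (exp z)) x := by
  obtain ⟨h₁, h₂, h₃⟩ := h
  set a := exp x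
  set b := exp y
  set c := exp z
  have ha : 0 < a := exp_pos x
  have hb : 0 < b := exp_pos y
  have hc : 0 < c := exp_pos z
  have hexp : HasDerivAt exp a x := hasDerivAt_exp x
  have hH : 0 < heron a b c := heron_pos h₁ h₂ h₃
  have hHβ : 0 < heron b c a := by rwa [heron_rotate]
  have hHγ : 0 < heron c a b := by rwa [heron_rotate, heron_rotate]
  have hα : HasDerivAt (fun u => eang (exp u) b c) (2 * a ^ 2 / √(heron a b c)) x := by
    have := (hasDerivAt_eang_opposite hb hc hH).comp x hexp
    exact this.congr_deriv (by ring)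
  have hβ : HasDerivAt (fun u => eang b c (exp u))
      (-(a ^ 2 + b ^ 2 - c ^ 2) / √(heron a b c)) x := by
    have := (hasDerivAt_eang_adjacent ha hc hH).comp x hexp
    exact this.congr_deriv (by field_simp)
  have hγ : HasDerivAt (fun u => eang c (exp u) b)
      (-(a ^ 2 + c ^ 2 - b ^ 2) / √(heron a b c)) x := by
    have := (hasDerivAt_eang_adjacent ha hb (heron_swap a b c ▸ hH)).comp x hexp
    simp only [eang_comm c]
    exact this.congr_deriv (by rw [heron_swap]; field_simp)
  have hlα : log |2 * sin (eang a b c)| = log √(heron a b c) - y - z := by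
    rw [log_abs_two_mul_sin_eang hb hc hH, log_exp, log_exp]
  have hlβ : log |2 * sin (eang b c a)| = log √(heron a b c) - z - x := by
    rw [log_abs_two_mul_sin_eang hc ha hHβ, heron_rotate, log_exp, log_exp]
  have hlγ : log |2 * sin (eang c a b)| = log √(heron a b c) - x - y := by
    rw [log_abs_two_mul_sin_eang ha hb hHγ, heron_rotate, heron_rotate, log_exp, log_exp]
  have hLα := (hasDerivAt_Lob (sin_eang_ne_zero hb hc hH)).comp x hα
  have hLβ := (hasDerivAt_Lob (sin_eang_ne_zero hc ha hHβ)).comp x hβ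
  have hLγ := (hasDerivAt_Lob (sin_eang_ne_zero ha hb hHγ)).comp x hγ
  have hF := (((((hα.mul (hasDerivAt_id' x)).add (hβ.mul_const y)).add (hγ.mul_const z)).add
    hLα).add hLβ).add hLγ
  refine hF.congr_deriv ?_
  rw [hlα, hlβ, hlγ]
  simp only [a]
  field_simp
  ring

lemma pi_mul_le_fTri_of_le_add {x y z : ℝ} (hb : exp y ≤ exp z + exp x)
    (hc : exp z ≤ exp x + exp y) : π * x ≤ fTri (x, y, z) := by
  rcases le_or_gt (exp y + exp z) (exp x) with h | h
  · exact (fTri_of_add_le h).ge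
  set v := log (exp y + exp z)
  have hv : exp v = exp y + exp z := exp_log (by positivity)
  have hxv : x ≤ v := by rw [← exp_le_exp, hv]; exact h.le
  have hAdom : ∀ w ∈ interior (Icc x v), (w, y, z) ∈ Adom := by
    rw [interior_Icc]
    intro w ⟨hxw, hwv⟩
    rw [← exp_lt_exp] at hxw hwv
    exact ⟨hv ▸ hwv, by linarith, by linarith⟩
  have hmvt := (convex_Icc x v).image_sub_le_mul_sub_of_deriv_le (f := fun u => fTri (u, y, z))
    (continuous_fTri.comp (by fun_prop : Continuous fun u : ℝ => (u, y, z))).continuousOn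
    (fun w hw => (hasDerivAt_fTri_fst (hAdom w hw)).differentiableAt.differentiableWithinAt)
    (fun w hw => (hasDerivAt_fTri_fst (hAdom w hw)).deriv.trans_le (arccos_le_pi _))
    x (left_mem_Icc.2 hxv) v (right_mem_Icc.2 hxv) hxv
  rw [fTri_of_add_le hv.ge] at hmvt
  linarith

lemma pi_mul_le_fTri (x y z : ℝ) : π * x ≤ fTri (x, y, z) := by
  by_cases hb : exp y ≤ exp z + exp x
  · by_cases hc : exp z ≤ exp x + exp y
    · exact pi_mul_le_fTri_of_le_add hb hc
    · have hxz : x ≤ z := exp_le_exp.1 (by linarith [exp_pos y])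
      rw [← fTri_rotate, ← fTri_rotate, fTri_of_add_le (by linarith)]
      gcongr
  · have hxy : x ≤ y := exp_le_exp.1 (by linarith [exp_pos z])
    rw [← fTri_rotate, fTri_of_add_le (by linarith)]
    gcongr

/-- The extended triangle function satisfies `f(x,y,z) ≥ π·max{x,y,z}`. -/
theorem fTri_ge_pi_max (p : ℝ × ℝ × ℝ) :
    π * max p.1 (max p.2.1 p.2.2) ≤ fTri p := by
  obtain ⟨x, y, z⟩ := p
  have hy : π * y ≤ fTri (x, y, z) := fTri_rotate x y z ▸ pi_mul_le_fTri y z x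
  have hz : π * z ≤ fTri (x, y, z) := by
    simpa only [fTri_rotate] using pi_mul_le_fTri z x y
  rw [mul_max_of_nonneg _ _ pi_pos.le, mul_max_of_nonneg _ _ pi_pos.le]
  exact max_le (pi_mul_le_fTri x y z) (max_le hy hz)
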